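/- arXiv:2507.05075 — 4 statements merged into one kernel-verified Lean document; each statement's English description precedes it below -/
import Mathlib

section
/- Let γ : [1,∞) → (0,∞) be a measurable slowly varying function (for every a > 0, γ(a u)/γ(u) → 1 as u → ∞), let p ∈ (−1,0), and set ε_j = γ(j) j^p for integers j ≥ 1. Then the partial sums Σ_{k=1}^{j−1} ε_k tend to +∞, so the scale sequence S_j = exp(Σ_{k=1}^{j−1} ε_k) tends to +∞, yet the growth is subexponential: (log S_j)/j → 0 as j → ∞; moreover (p+1)·(log S_j)/(γ(j) j^{p+1}) → 1, i.e., S_j ≍ exp(γ(j) j^{p+1}/(p+1)) at logarithmic order. -/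
/-!
With `h = log ∘ γ ∘ exp`, slow variation says `h (x + t) - h x → 0` for every `t`. For measurable
`h` this convergence is uniform in `t ∈ [0, 1]`: by Egorov's theorem the increments of `h` at `x`
and at `x + t` are uniformly small off two sets of measure `≤ 1/4`, so some `s ∈ [0, 1]` sees both
small, and `h (x + t) - h x` is their difference at `s + t` and `s`. Chaining unit steps gives
Potter's bounds `e^{-δ} (x/y)^δ ≤ γ x / γ y ≤ e^δ (y/x)^δ` for large `x ≤ y`. Inserting them into
`∑_{N ≤ k < j} γ k k^p` and comparing `∑ k^{p ± δ}` with `∫ x^{p ± δ} dx` traps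
`(p + 1) ∑_{k < j} γ k k^p / (γ j j^{p+1})` between `e^{∓δ} (p + 1)/(p + 1 ± δ) + o(1)`, so it
tends to `1` (Karamata's theorem for sums). Potter's bounds also give `log γ x / log x → 0`, hence
`γ j j^{p+1} → ∞` and `γ j j^p → 0`: the first makes `log S_j` diverge, the second makes
`log S_j / j ≍ γ j j^p` vanish.
-/

open Filter Real MeasureTheory Set Topology

theorem tendsto_of_forall_eventually_bounds {α ι β : Type*} [TopologicalSpace β] [LinearOrder β]
    [OrderTopology β] {l : Filter α} {F : Filter ι} [F.NeBot] {f : α → β} {L U : ι → β} {a : β}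
    (hL : Tendsto L F (𝓝 a)) (hU : Tendsto U F (𝓝 a))
    (hlow : ∀ᶠ i in F, ∃ g : α → β, Tendsto g l (𝓝 (L i)) ∧ ∀ᶠ x in l, g x ≤ f x)
    (hup : ∀ᶠ i in F, ∃ g : α → β, Tendsto g l (𝓝 (U i)) ∧ ∀ᶠ x in l, f x ≤ g x) :
    Tendsto f l (𝓝 a) := by
  rw [tendsto_order]
  constructor
  · intro c hc
    obtain ⟨i, hLi, g, hg, hgf⟩ := ((hL.eventually (lt_mem_nhds hc)).and hlow).exists
    filter_upwards [hg.eventually (lt_mem_nhds hLi), hgf] with x hcg hgx using hcg.trans_le hgx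
  · intro c hc
    obtain ⟨i, hUi, g, hg, hfg⟩ := ((hU.eventually (gt_mem_nhds hc)).and hup).exists
    filter_upwards [hg.eventually (gt_mem_nhds hUi), hfg] with x hgc hfx using hfx.trans_lt hgc

-- The uniform convergence theorem for slowly varying functions, in additive form.
theorem eventually_forall_Icc_abs_sub_le {h : ℝ → ℝ} (hmeas : Measurable h)
    (hlim : ∀ t, Tendsto (fun x => h (x + t) - h x) atTop (𝓝 0)) {δ : ℝ} (hδ : 0 < δ) :
    ∀ᶠ x in atTop, ∀ t ∈ Icc (0 : ℝ) 1, |h (x + t) - h x| ≤ δ := by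
  by_contra hcon
  simp only [not_eventually, frequently_atTop, not_forall, not_le] at hcon
  choose x hx t ht hbig using fun n : ℕ => hcon n
  have hx_top : Tendsto x atTop atTop := tendsto_atTop_mono hx tendsto_natCast_atTop_atTop
  have hxt_top : Tendsto (fun n => x n + t n) atTop atTop :=
    tendsto_atTop_mono (fun n => le_add_of_nonneg_right (ht n).1) hx_top
  have egorov : ∀ y : ℕ → ℝ, Tendsto y atTop atTop → ∃ E, volume E ≤ ENNReal.ofReal (1 / 4) ∧
      ∀ᶠ n in atTop, ∀ s ∈ Icc (0 : ℝ) 2 \ E, |h (y n + s) - h (y n)| < δ / 2 := by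
    intro y hy
    obtain ⟨E, -, -, hEμ, hunif⟩ := tendstoUniformlyOn_of_ae_tendsto (μ := volume)
      (f := fun n s => h (y n + s) - h (y n)) (g := 0)
      (fun n => ((hmeas.comp (measurable_const_add _)).sub measurable_const).stronglyMeasurable)
      stronglyMeasurable_const measurableSet_Icc (by simp)
      (ae_of_all _ fun s _ => (hlim s).comp hy) (by norm_num : (0 : ℝ) < 1 / 4)
    refine ⟨E, hEμ, ?_⟩
    simpa [Real.dist_eq, abs_sub_comm] using
      Metric.tendstoUniformlyOn_iff.1 hunif (δ / 2) (half_pos hδ)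
  obtain ⟨E, hE, hEn⟩ := egorov x hx_top
  obtain ⟨F, hF, hFn⟩ := egorov _ hxt_top
  obtain ⟨n, hEn, hFn⟩ := (hEn.and hFn).exists
  obtain ⟨s, hs, hsF⟩ : ∃ s ∈ Icc (0 : ℝ) 1, s ∉ F ∪ (· + t n) ⁻¹' E := by
    by_contra! hcover
    have : volume (Icc (0 : ℝ) 1) ≤ ENNReal.ofReal (1 / 4) + ENNReal.ofReal (1 / 4) := calc
      _ ≤ volume (F ∪ (· + t n) ⁻¹' E) := measure_mono hcover
      _ ≤ volume F + volume ((· + t n) ⁻¹' E) := measure_union_le _ _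
      _ ≤ _ := by rw [measure_preimage_add_right]; exact add_le_add hF hE
    rw [Real.volume_Icc, ← ENNReal.ofReal_add (by norm_num) (by norm_num)] at this
    norm_num at this
  rw [mem_union, not_or, mem_preimage] at hsF
  have h₁ := hEn (s + t n) ⟨⟨by linarith [hs.1, (ht n).1], by linarith [hs.2, (ht n).2]⟩, hsF.2⟩
  have h₂ := hFn s ⟨⟨hs.1, by linarith [hs.2]⟩, hsF.1⟩
  have hsplit : h (x n + t n) - h (x n) =
      (h (x n + (s + t n)) - h (x n)) - (h (x n + t n + s) - h (x n + t n)) := by ring_nf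
  have := hbig n
  rw [hsplit] at this
  linarith [abs_sub (h (x n + (s + t n)) - h (x n)) (h (x n + t n + s) - h (x n + t n))]

theorem abs_sub_le_mul_of_forall_Icc {h : ℝ → ℝ} {X δ : ℝ} (hδ : 0 ≤ δ)
    (H : ∀ x ≥ X, ∀ t ∈ Icc (0 : ℝ) 1, |h (x + t) - h x| ≤ δ) {u v : ℝ} (hu : X ≤ u)
    (huv : u ≤ v) : |h v - h u| ≤ δ * (v - u + 1) := by
  set n := ⌊v - u⌋₊
  set s := (v - u) / (n + 1)
  have hs : s ∈ Icc (0 : ℝ) 1 :=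
    ⟨by positivity, (div_le_one (by positivity)).2 (Nat.lt_floor_add_one _).le⟩
  have htele : h v - h u =
      ∑ i ∈ Finset.range (n + 1), (h (u + (i + 1 : ℕ) * s) - h (u + i * s)) := by
    rw [Finset.sum_range_sub (fun i : ℕ => h (u + i * s)), Nat.cast_zero, zero_mul, add_zero]
    congr 2
    push_cast
    rw [mul_div_cancel₀ _ (by positivity)]
    ring
  calc |h v - h u| ≤ ∑ i ∈ Finset.range (n + 1), |h (u + (i + 1 : ℕ) * s) - h (u + i * s)| := by
        rw [htele]; exact Finset.abs_sum_le_sum_abs _ _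
    _ ≤ ∑ i ∈ Finset.range (n + 1), δ := Finset.sum_le_sum fun i _ => by
        have := H (u + i * s) (le_add_of_le_of_nonneg hu (mul_nonneg i.cast_nonneg hs.1)) s hs
        rwa [Nat.cast_succ, add_one_mul, ← add_assoc]
    _ = δ * (n + 1) := by simp [mul_comm]
    _ ≤ δ * (v - u + 1) := by gcongr; exact Nat.floor_le (by linarith)

theorem le_sum_Ico_rpow {q : ℝ} (hq : -1 < q) (hq0 : q ≤ 0) {m j : ℕ} (hm : 1 ≤ m)
    (hmj : m ≤ j) :
    ((j : ℝ) ^ (q + 1) - (m : ℝ) ^ (q + 1)) / (q + 1) ≤ ∑ k ∈ Finset.Ico m j, (k : ℝ) ^ q := by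
  rw [← integral_rpow (Or.inl hq)]
  refine AntitoneOn.integral_le_sum_Ico hmj ((antitoneOn_rpow_Ioi_of_exponent_nonpos hq0).mono ?_)
  intro x hx
  exact lt_of_lt_of_le (by exact_mod_cast hm) hx.1

theorem sum_Ico_rpow_le {q : ℝ} (hq : -1 < q) (hq0 : q ≤ 0) {m j : ℕ} (hm : 2 ≤ m)
    (hmj : m ≤ j) : ∑ k ∈ Finset.Ico m j, (k : ℝ) ^ q ≤ (j : ℝ) ^ (q + 1) / (q + 1) := by
  obtain ⟨a, rfl⟩ : ∃ a, m = a + 1 := ⟨m - 1, by omega⟩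
  obtain ⟨b, rfl⟩ : ∃ b, j = b + 1 := ⟨j - 1, by omega⟩
  have ha : (1 : ℝ) ≤ a := by exact_mod_cast (by omega : 1 ≤ a)
  calc ∑ k ∈ Finset.Ico (a + 1) (b + 1), (k : ℝ) ^ q
      = ∑ i ∈ Finset.Ico a b, ((i + 1 : ℕ) : ℝ) ^ q := (Finset.sum_Ico_add' _ a b 1).symm
    _ ≤ ∫ x in (a : ℝ)..b, x ^ q :=
        AntitoneOn.sum_le_integral_Ico (by omega)
          ((antitoneOn_rpow_Ioi_of_exponent_nonpos hq0).mono fun x hx => by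
            exact lt_of_lt_of_le (by linarith) hx.1)
    _ = ((b : ℝ) ^ (q + 1) - (a : ℝ) ^ (q + 1)) / (q + 1) := integral_rpow (Or.inl hq)
    _ ≤ ((b + 1 : ℕ) : ℝ) ^ (q + 1) / (q + 1) := by
        have : 0 < q + 1 := by linarith
        have hb : (b : ℝ) ^ (q + 1) ≤ ((b + 1 : ℕ) : ℝ) ^ (q + 1) :=
          rpow_le_rpow (by positivity) (by push_cast; linarith) this.le
        gcongr
        linarith [rpow_nonneg (by linarith : (0 : ℝ) ≤ a) (q + 1)]

theorem exp_log_mul_log_div_log_add {a x : ℝ} (ha : 0 < a) (hx : 1 < x) (q : ℝ) :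
    exp (log x * (log a / log x + q)) = a * x ^ q := by
  rw [mul_add, mul_div_cancel₀ _ (log_pos hx).ne', exp_add, exp_log ha,
    rpow_def_of_pos (by linarith)]

noncomputable def karamataRatio (γ : ℝ → ℝ) (p : ℝ) (j : ℕ) : ℝ :=
  (p + 1) * (∑ k ∈ Finset.Ico 1 j, γ k * (k : ℝ) ^ p) / (γ j * (j : ℝ) ^ (p + 1))

theorem karamataRatio_eq_add (γ : ℝ → ℝ) (p : ℝ) {N j : ℕ} (hN : 1 ≤ N) (hNj : N ≤ j) :
    karamataRatio γ p j =
      (p + 1) * (∑ k ∈ Finset.Ico 1 N, γ k * (k : ℝ) ^ p) / (γ j * (j : ℝ) ^ (p + 1)) +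
        (p + 1) * ((∑ k ∈ Finset.Ico N j, γ k * (k : ℝ) ^ p) / (γ j * (j : ℝ) ^ (p + 1))) := by
  rw [karamataRatio, ← Finset.sum_Ico_consecutive _ hN hNj]
  ring

theorem sum_eq_karamataRatio_mul {γ : ℝ → ℝ} {p : ℝ} {j : ℕ} (hγj : γ j ≠ 0) (hj : 0 < j)
    (hp : p + 1 ≠ 0) :
    ∑ k ∈ Finset.Ico 1 j, γ k * (k : ℝ) ^ p =
      karamataRatio γ p j * (γ j * (j : ℝ) ^ (p + 1)) / (p + 1) := by
  have : (j : ℝ) ^ (p + 1) ≠ 0 := by positivity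
  rw [karamataRatio]
  field_simp

def SlowlyVarying (γ : ℝ → ℝ) : Prop :=
  ∀ a : ℝ, 0 < a → Tendsto (fun u => γ (a * u) / γ u) atTop (𝓝 1)

namespace SlowlyVarying

variable {γ : ℝ → ℝ} (hγ : SlowlyVarying γ) (hpos : ∀ᶠ u in atTop, 0 < γ u)
include hγ hpos

theorem tendsto_log_comp_exp_add_sub (t : ℝ) :
    Tendsto (fun x => log (γ (exp (x + t))) - log (γ (exp x))) atTop (𝓝 0) := by
  have hlim : Tendsto (fun x => log (γ (exp t * exp x) / γ (exp x))) atTop (𝓝 0) := by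
    simpa [Function.comp_def] using (continuousAt_log one_ne_zero).tendsto.comp
      ((hγ _ (exp_pos t)).comp tendsto_exp_atTop)
  refine hlim.congr' ?_
  filter_upwards [tendsto_exp_atTop.eventually hpos,
    (tendsto_exp_atTop.comp (tendsto_atTop_add_const_right _ t tendsto_id)).eventually hpos]
    with x hx hxt
  have hxt : 0 < γ (exp (x + t)) := hxt
  rw [← exp_add, add_comm t, log_div hxt.ne' hx.ne']

variable (hmeas : Measurable γ)
include hmeas

theorem eventually_abs_log_sub_le {δ : ℝ} (hδ : 0 < δ) :
    ∀ᶠ x in atTop, ∀ y, x ≤ y → |log (γ y) - log (γ x)| ≤ δ * (log y - log x + 1) := by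
  obtain ⟨X, hX⟩ := eventually_atTop.1 <| eventually_forall_Icc_abs_sub_le
    (h := fun x => log (γ (exp x))) (by fun_prop) (hγ.tendsto_log_comp_exp_add_sub hpos) hδ
  filter_upwards [eventually_gt_atTop 0, eventually_ge_atTop (exp X)] with x hx hxX y hxy
  have := abs_sub_le_mul_of_forall_Icc (h := fun x => log (γ (exp x))) hδ.le hX
    ((le_log_iff_exp_le hx).2 hxX) (log_le_log hx hxy)
  simpa only [exp_log hx, exp_log (hx.trans_le hxy)] using this

theorem eventually_potter {δ : ℝ} (hδ : 0 < δ) :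
    ∀ᶠ x in atTop, ∀ y, x ≤ y →
      exp (-δ) * (x / y) ^ δ * γ y ≤ γ x ∧ γ x ≤ exp δ * (y / x) ^ δ * γ y := by
  filter_upwards [hγ.eventually_abs_log_sub_le hpos hmeas hδ, eventually_gt_atTop 0,
    eventually_forall_ge_atTop.2 hpos] with x hlog hx hγpos y hxy
  have hy : 0 < y := hx.trans_le hxy
  have hγx := hγpos x le_rfl
  have hγy := hγpos y hxy
  obtain ⟨h₁, h₂⟩ := abs_le.1 (hlog y hxy)
  constructor
  · rw [← log_le_log_iff (by positivity) hγx, log_mul (by positivity) hγy.ne',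
      log_mul (by positivity) (by positivity), log_exp, log_rpow (by positivity),
      log_div hx.ne' hy.ne']
    linarith
  · rw [← log_le_log_iff hγx (by positivity), log_mul (by positivity) hγy.ne',
      log_mul (by positivity) (by positivity), log_exp, log_rpow (by positivity),
      log_div hy.ne' hx.ne']
    linarith

theorem tendsto_log_div_log : Tendsto (fun x => log (γ x) / log x) atTop (𝓝 0) := by
  rw [Metric.tendsto_nhds]
  intro η hη
  obtain ⟨x₀, hx₀⟩ := (hγ.eventually_abs_log_sub_le hpos hmeas (half_pos hη)).exists
  set C := |log (γ x₀)| + η / 2 * (1 - log x₀) with hC_def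
  have hC : Tendsto (fun y => C / log y) atTop (𝓝 0) :=
    tendsto_const_nhds.div_atTop tendsto_log_atTop
  filter_upwards [eventually_ge_atTop x₀, tendsto_log_atTop.eventually_gt_atTop 0,
    hC.eventually (gt_mem_nhds (half_pos hη))] with y hy hlog hCy
  rw [div_lt_iff₀ hlog] at hCy
  rw [dist_zero_right, norm_div, Real.norm_eq_abs, Real.norm_eq_abs, abs_of_pos hlog,
    div_lt_iff₀ hlog]
  linarith [hC_def, hx₀ y hy, abs_sub_abs_le_abs_sub (log (γ y)) (log (γ x₀))]

theorem tendsto_mul_rpow_atTop {q : ℝ} (hq : 0 < q) :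
    Tendsto (fun x => γ x * x ^ q) atTop atTop := by
  have h := tendsto_log_atTop.atTop_mul_pos hq
    (by simpa using (hγ.tendsto_log_div_log hpos hmeas).add_const q)
  refine (tendsto_exp_atTop.comp h).congr' ?_
  filter_upwards [hpos, eventually_gt_atTop 1] with x hγx hx
  exact exp_log_mul_log_div_log_add hγx hx q

theorem tendsto_mul_rpow_nhds_zero {q : ℝ} (hq : q < 0) :
    Tendsto (fun x => γ x * x ^ q) atTop (𝓝 0) := by
  have h := tendsto_log_atTop.atTop_mul_neg hq
    (by simpa using (hγ.tendsto_log_div_log hpos hmeas).add_const q)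
  refine (tendsto_exp_atBot.comp h).congr' ?_
  filter_upwards [hpos, eventually_gt_atTop 1] with x hγx hx
  exact exp_log_mul_log_div_log_add hγx hx q

theorem eventually_sum_Ico_le {p δ : ℝ} (hp : p < 0) (hδ : 0 < δ) (hδp : δ < p + 1) :
    ∀ᶠ N : ℕ in atTop, ∀ j, N ≤ j →
      ∑ k ∈ Finset.Ico N j, γ k * (k : ℝ) ^ p ≤
        exp δ / (p - δ + 1) * (γ j * (j : ℝ) ^ (p + 1)) := by
  filter_upwards [tendsto_natCast_atTop_atTop.eventually
    (eventually_forall_ge_atTop.2 (hγ.eventually_potter hpos hmeas hδ)),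
    tendsto_natCast_atTop_atTop.eventually (eventually_forall_ge_atTop.2 hpos),
    eventually_ge_atTop 2] with N hN hγpos hN2 j hNj
  have hj : (0 : ℝ) < j := by exact_mod_cast (by omega : 0 < j)
  have hterm : ∀ k ∈ Finset.Ico N j,
      γ k * (k : ℝ) ^ p ≤ exp δ * γ j * (j : ℝ) ^ δ * (k : ℝ) ^ (p - δ) := by
    intro k hk
    obtain ⟨hNk, hkj⟩ := Finset.mem_Ico.1 hk
    have hk : (0 : ℝ) < k := by exact_mod_cast (by omega : 0 < k)
    have hγk := (hN k (by exact_mod_cast hNk) j (by exact_mod_cast hkj.le)).2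
    rw [div_rpow hj.le hk.le] at hγk
    rw [rpow_sub hk]
    calc γ k * (k : ℝ) ^ p ≤ exp δ * ((j : ℝ) ^ δ / (k : ℝ) ^ δ) * γ j * (k : ℝ) ^ p := by gcongr
      _ = _ := by ring
  calc ∑ k ∈ Finset.Ico N j, γ k * (k : ℝ) ^ p
      ≤ ∑ k ∈ Finset.Ico N j, exp δ * γ j * (j : ℝ) ^ δ * (k : ℝ) ^ (p - δ) :=
        Finset.sum_le_sum hterm
    _ = exp δ * γ j * (j : ℝ) ^ δ * ∑ k ∈ Finset.Ico N j, (k : ℝ) ^ (p - δ) :=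
        (Finset.mul_sum _ _ _).symm
    _ ≤ exp δ * γ j * (j : ℝ) ^ δ * ((j : ℝ) ^ (p - δ + 1) / (p - δ + 1)) := by
        have := hγpos j (by exact_mod_cast hNj)
        gcongr
        exact sum_Ico_rpow_le (by linarith) (by linarith) hN2 hNj
    _ = exp δ / (p - δ + 1) * (γ j * (j : ℝ) ^ (p + 1)) := by
        rw [mul_div_assoc', mul_assoc _ ((j : ℝ) ^ δ), ← rpow_add hj]
        ring_nf

theorem eventually_le_sum_Ico {p δ : ℝ} (hp : -1 < p) (hδ : 0 < δ) (hδp : δ ≤ -p) :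
    ∀ᶠ N : ℕ in atTop, ∀ j, N ≤ j →
      exp (-δ) / (p + δ + 1) * (1 - ((N : ℝ) / j) ^ (p + δ + 1)) * (γ j * (j : ℝ) ^ (p + 1)) ≤
        ∑ k ∈ Finset.Ico N j, γ k * (k : ℝ) ^ p := by
  filter_upwards [tendsto_natCast_atTop_atTop.eventually
    (eventually_forall_ge_atTop.2 (hγ.eventually_potter hpos hmeas hδ)),
    tendsto_natCast_atTop_atTop.eventually (eventually_forall_ge_atTop.2 hpos),
    eventually_ge_atTop 1] with N hN hγpos hN1 j hNj
  have hj : (0 : ℝ) < j := by exact_mod_cast (by omega : 0 < j)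
  have hterm : ∀ k ∈ Finset.Ico N j,
      exp (-δ) * γ j * (j : ℝ) ^ (-δ) * (k : ℝ) ^ (p + δ) ≤ γ k * (k : ℝ) ^ p := by
    intro k hk
    obtain ⟨hNk, hkj⟩ := Finset.mem_Ico.1 hk
    have hk : (0 : ℝ) < k := by exact_mod_cast (by omega : 0 < k)
    have hγk := (hN k (by exact_mod_cast hNk) j (by exact_mod_cast hkj.le)).1
    rw [div_rpow hk.le hj.le] at hγk
    rw [rpow_add hk, rpow_neg hj.le]
    calc exp (-δ) * γ j * ((j : ℝ) ^ δ)⁻¹ * ((k : ℝ) ^ p * (k : ℝ) ^ δ)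
        = exp (-δ) * ((k : ℝ) ^ δ / (j : ℝ) ^ δ) * γ j * (k : ℝ) ^ p := by ring
      _ ≤ γ k * (k : ℝ) ^ p := by gcongr
  calc exp (-δ) / (p + δ + 1) * (1 - ((N : ℝ) / j) ^ (p + δ + 1)) * (γ j * (j : ℝ) ^ (p + 1))
      = exp (-δ) * γ j * (j : ℝ) ^ (-δ) *
          (((j : ℝ) ^ (p + δ + 1) - (N : ℝ) ^ (p + δ + 1)) / (p + δ + 1)) := by
        have hsplit : (j : ℝ) ^ (p + 1) = (j : ℝ) ^ (-δ) * (j : ℝ) ^ (p + δ + 1) := by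
          rw [← rpow_add hj]; ring_nf
        have : (j : ℝ) ^ (p + δ + 1) ≠ 0 := by positivity
        have : p + δ + 1 ≠ 0 := by linarith
        rw [div_rpow (by positivity) hj.le, hsplit]
        field_simp
    _ ≤ exp (-δ) * γ j * (j : ℝ) ^ (-δ) * ∑ k ∈ Finset.Ico N j, (k : ℝ) ^ (p + δ) := by
        have := hγpos j (by exact_mod_cast hNj)
        gcongr
        exact le_sum_Ico_rpow (by linarith) (by linarith) hN1 hNj
    _ = ∑ k ∈ Finset.Ico N j, exp (-δ) * γ j * (j : ℝ) ^ (-δ) * (k : ℝ) ^ (p + δ) :=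
        Finset.mul_sum _ _ _
    _ ≤ ∑ k ∈ Finset.Ico N j, γ k * (k : ℝ) ^ p := Finset.sum_le_sum hterm

theorem eventually_exists_tendsto_le_karamataRatio {p : ℝ} (hp1 : -1 < p) (hp : p < 0) :
    ∀ᶠ δ in 𝓝[>] 0, ∃ g : ℕ → ℝ, Tendsto g atTop (𝓝 ((p + 1) * (exp (-δ) / (p + δ + 1)))) ∧
      ∀ᶠ j in atTop, g j ≤ karamataRatio γ p j := by
  have hD : Tendsto (fun j : ℕ => γ j * (j : ℝ) ^ (p + 1)) atTop atTop :=
    (hγ.tendsto_mul_rpow_atTop hpos hmeas (by linarith)).comp tendsto_natCast_atTop_atTop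
  filter_upwards [Ioo_mem_nhdsGT (show (0 : ℝ) < -p by linarith)] with δ ⟨hδ, hδp⟩
  obtain ⟨N, hN, hN1⟩ :=
    ((hγ.eventually_le_sum_Ico hpos hmeas hp1 hδ hδp.le).and (eventually_ge_atTop 1)).exists
  refine ⟨fun j =>
    (p + 1) * (∑ k ∈ Finset.Ico 1 N, γ k * (k : ℝ) ^ p) / (γ j * (j : ℝ) ^ (p + 1)) +
      (p + 1) * (exp (-δ) / (p + δ + 1) * (1 - ((N : ℝ) / j) ^ (p + δ + 1))), ?_, ?_⟩
  · have hNj : Tendsto (fun j : ℕ => ((N : ℝ) / j) ^ (p + δ + 1)) atTop (𝓝 0) :=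
      (tendsto_const_div_atTop_nhds_zero_nat (N : ℝ)).rpow_const_nhds_zero (by linarith)
    simpa using (tendsto_const_nhds.div_atTop hD).add
      (((hNj.const_sub 1).const_mul _).const_mul (p + 1))
  · filter_upwards [eventually_ge_atTop N, hD.eventually_gt_atTop 0] with j hNj hDj
    rw [karamataRatio_eq_add γ p hN1 hNj]
    refine add_le_add le_rfl (mul_le_mul_of_nonneg_left ?_ (by linarith))
    rw [le_div_iff₀ hDj]
    exact hN j hNj

theorem eventually_exists_tendsto_karamataRatio_le {p : ℝ} (hp1 : -1 < p) (hp : p < 0) :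
    ∀ᶠ δ in 𝓝[>] 0, ∃ g : ℕ → ℝ, Tendsto g atTop (𝓝 ((p + 1) * (exp δ / (p - δ + 1)))) ∧
      ∀ᶠ j in atTop, karamataRatio γ p j ≤ g j := by
  have hD : Tendsto (fun j : ℕ => γ j * (j : ℝ) ^ (p + 1)) atTop atTop :=
    (hγ.tendsto_mul_rpow_atTop hpos hmeas (by linarith)).comp tendsto_natCast_atTop_atTop
  filter_upwards [Ioo_mem_nhdsGT (show (0 : ℝ) < p + 1 by linarith)] with δ ⟨hδ, hδp⟩
  obtain ⟨N, hN, hN1⟩ :=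
    ((hγ.eventually_sum_Ico_le hpos hmeas hp hδ hδp).and (eventually_ge_atTop 1)).exists
  refine ⟨fun j =>
    (p + 1) * (∑ k ∈ Finset.Ico 1 N, γ k * (k : ℝ) ^ p) / (γ j * (j : ℝ) ^ (p + 1)) +
      (p + 1) * (exp δ / (p - δ + 1)), ?_, ?_⟩
  · simpa using (tendsto_const_nhds.div_atTop hD).add_const ((p + 1) * (exp δ / (p - δ + 1)))
  · filter_upwards [eventually_ge_atTop N, hD.eventually_gt_atTop 0] with j hNj hDj
    rw [karamataRatio_eq_add γ p hN1 hNj]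
    refine add_le_add le_rfl (mul_le_mul_of_nonneg_left ?_ (by linarith))
    rw [div_le_iff₀ hDj]
    exact hN j hNj

theorem tendsto_karamataRatio {p : ℝ} (hp1 : -1 < p) (hp : p < 0) :
    Tendsto (karamataRatio γ p) atTop (𝓝 1) := by
  have hp1' : p + 1 ≠ 0 := by linarith
  have hL : ContinuousAt (fun δ => (p + 1) * (exp (-δ) / (p + δ + 1))) 0 := by
    fun_prop (disch := simpa using hp1')
  have hU : ContinuousAt (fun δ => (p + 1) * (exp δ / (p - δ + 1))) 0 := by
    fun_prop (disch := simpa using hp1')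
  exact tendsto_of_forall_eventually_bounds
    (by simpa [hp1'] using hL.tendsto.mono_left nhdsWithin_le_nhds)
    (by simpa [hp1'] using hU.tendsto.mono_left nhdsWithin_le_nhds)
    (hγ.eventually_exists_tendsto_le_karamataRatio hpos hmeas hp1 hp)
    (hγ.eventually_exists_tendsto_karamataRatio_le hpos hmeas hp1 hp)

end SlowlyVarying

/-- For slowly varying `γ` and `p ∈ (-1,0)`, the partial sums of `ε_j = γ(j) j^p` diverge,
the scales `S_j = exp(Σ_{k=1}^{j-1} ε_k)` diverge, yet `log S_j / j → 0` (subexponential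
growth), and `(p+1) log S_j / (γ(j) j^{p+1}) → 1`. -/
theorem divergent_subexponential_scales
    (γ : ℝ → ℝ) (hmeas : Measurable γ) (hγpos : ∀ u : ℝ, 1 ≤ u → 0 < γ u)
    (hsv : ∀ a : ℝ, 0 < a → Tendsto (fun u : ℝ => γ (a * u) / γ u) atTop (nhds 1))
    (p : ℝ) (hp₁ : -1 < p) (hp₂ : p < 0)
    (ε : ℕ → ℝ) (hε : ∀ j : ℕ, 1 ≤ j → ε j = γ j * (j : ℝ) ^ p)
    (S : ℕ → ℝ) (hS : ∀ j, S j = Real.exp (∑ k ∈ Finset.Ico 1 j, ε k)) :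
    Tendsto (fun j : ℕ => ∑ k ∈ Finset.Ico 1 j, ε k) atTop atTop ∧
      Tendsto S atTop atTop ∧
      Tendsto (fun j : ℕ => Real.log (S j) / (j : ℝ)) atTop (nhds 0) ∧
      Tendsto (fun j : ℕ =>
          (p + 1) * Real.log (S j) / (γ j * (j : ℝ) ^ (p + 1))) atTop (nhds 1) := by
  have hγ : SlowlyVarying γ := hsv
  have hpos : ∀ᶠ u in atTop, 0 < γ u := eventually_atTop.2 ⟨1, hγpos⟩
  have hR := hγ.tendsto_karamataRatio hpos hmeas hp₁ hp₂
  have hD : Tendsto (fun j : ℕ => γ j * (j : ℝ) ^ (p + 1)) atTop atTop :=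
    (hγ.tendsto_mul_rpow_atTop hpos hmeas (by linarith)).comp tendsto_natCast_atTop_atTop
  have hε₀ : Tendsto (fun j : ℕ => γ j * (j : ℝ) ^ p) atTop (𝓝 0) :=
    (hγ.tendsto_mul_rpow_nhds_zero hpos hmeas hp₂).comp tendsto_natCast_atTop_atTop
  have hlogS : ∀ j, log (S j) = ∑ k ∈ Finset.Ico 1 j, γ k * (k : ℝ) ^ p := fun j => by
    rw [hS, log_exp]
    exact Finset.sum_congr rfl fun k hk => hε k (Finset.mem_Ico.1 hk).1
  have hlogS_eq : ∀ᶠ j : ℕ in atTop,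
      log (S j) = karamataRatio γ p j * (γ j * (j : ℝ) ^ (p + 1)) / (p + 1) := by
    filter_upwards [eventually_gt_atTop 0] with j hj
    rw [hlogS, sum_eq_karamataRatio_mul (hγpos j (by exact_mod_cast hj)).ne' hj (by linarith)]
  have hlogS_top : Tendsto (fun j => log (S j)) atTop atTop :=
    ((hR.pos_mul_atTop one_pos hD).atTop_div_const (by linarith)).congr'
      (hlogS_eq.mono fun j h => h.symm)
  refine ⟨hlogS_top.congr fun j => ?_, ?_, ?_, ?_⟩
  · rw [hS, log_exp]
  · exact (tendsto_exp_atTop.comp hlogS_top).congr fun j => by simp [hS]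
  · have h : Tendsto (fun j => karamataRatio γ p j * (γ j * (j : ℝ) ^ p) / (p + 1))
        atTop (𝓝 0) := by
      simpa using (hR.mul hε₀).div_const (p + 1)
    refine h.congr' ?_
    filter_upwards [hlogS_eq, eventually_gt_atTop 0] with j hj hj0
    rw [hj, rpow_add_one (by positivity)]
    field_simp
  · exact hR.congr fun j => by rw [karamataRatio, hlogS]
end

section
/- Fix η > 0 and q ∈ (0,1), and set ε_k = η q (log k)^{q−1}/k for integers k ≥ 2 (log-power exponential scales). Define S_j = exp(Σ_{k=2}^{j−1} ε_k) for j ≥ 3. Then (log S_j)/(η (log j)^q) → 1 as j → ∞ (so S_j grows like exp(η (log j)^q) at logarithmic order), and the relative bandwidth ratio Δ_j = (S_{j+1} − S_{j−1})/S_j satisfies (j (log j)^{1−q})·Δ_j → 2ηq as j → ∞. -/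
open Filter Real Asymptotics Finset Set Topology

/-!
`(log x)^q` has derivative `φ x = q (log x)^(q-1) / x`, which is nonnegative and decreasing on
`(1, ∞)`. Comparing `∑_{2 ≤ k < j} φ k` with `∫_2^j φ` traps it between `(log j)^q - (log 2)^q`
and that plus `φ 2`; as `log S_j = η ∑_{2 ≤ k < j} φ k`, this gives the first limit.
For the second, `Δ_{j+1} = exp ε_{j+1} - exp (-ε_j)` with `ε → 0`, so both terms are
asymptotic to the corresponding `ε`. The weight `(j+1) (log (j+1))^(1-q)` is exactly
`ηq / ε_{j+1}`, and `ε_{j+1} ~ ε_j`, so each term contributes `ηq`.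
-/

section SumIntegralComparison

variable {f φ : ℝ → ℝ} {a n : ℕ}

theorem integral_eq_sub_of_hasDerivAt_of_antitoneOn (hf : ∀ x ≥ (a : ℝ), HasDerivAt f (φ x) x)
    (hφ : AntitoneOn φ (Ici (a : ℝ))) (han : a ≤ n) :
    ∫ x in (a : ℝ)..n, φ x = f n - f a := by
  have hIcc : uIcc (a : ℝ) n = Icc (a : ℝ) n := uIcc_of_le (by exact_mod_cast han)
  refine intervalIntegral.integral_eq_sub_of_hasDerivAt (fun x hx => hf x ?_) ?_
  · rw [hIcc] at hx
    exact hx.1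
  · exact (hφ.mono (hIcc ▸ Icc_subset_Ici_self)).intervalIntegrable

theorem sub_le_sum_Ico_of_hasDerivAt (hf : ∀ x ≥ (a : ℝ), HasDerivAt f (φ x) x)
    (hφ : AntitoneOn φ (Ici (a : ℝ))) (han : a ≤ n) :
    f n - f a ≤ ∑ k ∈ Ico a n, φ k := by
  rw [← integral_eq_sub_of_hasDerivAt_of_antitoneOn hf hφ han]
  exact AntitoneOn.integral_le_sum_Ico han (hφ.mono Icc_subset_Ici_self)

theorem sum_Ico_le_of_hasDerivAt (hf : ∀ x ≥ (a : ℝ), HasDerivAt f (φ x) x)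
    (hφ : AntitoneOn φ (Ici (a : ℝ))) (han : a ≤ n) :
    ∑ k ∈ Ico a n, φ k ≤ f n - f a + (φ a - φ n) := by
  have hshift : ∑ k ∈ Ico a n, φ ↑(k + 1) ≤ f n - f a := by
    rw [← integral_eq_sub_of_hasDerivAt_of_antitoneOn hf hφ han]
    exact AntitoneOn.sum_le_integral_Ico han (hφ.mono Icc_subset_Ici_self)
  have htele := sum_Ico_sub (fun k : ℕ => φ k) han
  rw [sum_sub_distrib] at htele
  linarith

theorem tendsto_sum_Ico_div_of_hasDerivAt (hf : ∀ x ≥ (a : ℝ), HasDerivAt f (φ x) x)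
    (hφ : AntitoneOn φ (Ici (a : ℝ))) (hφ₀ : ∀ x ≥ (a : ℝ), 0 ≤ φ x)
    (hf_top : Tendsto f atTop atTop) :
    Tendsto (fun n : ℕ => (∑ k ∈ Ico a n, φ k) / f n) atTop (𝓝 1) := by
  have hf_nat : Tendsto (fun n : ℕ => f n) atTop atTop := hf_top.comp tendsto_natCast_atTop_atTop
  have h_add_div (c : ℝ) : Tendsto (fun n : ℕ => (f n + c) / f n) atTop (𝓝 1) := by
    have h := (tendsto_const_nhds (x := (1 : ℝ))).add (tendsto_const_nhds (x := c).div_atTop hf_nat)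
    rw [add_zero] at h
    refine h.congr' ?_
    filter_upwards [hf_nat.eventually_gt_atTop 0] with n hn
    field_simp
  refine tendsto_of_tendsto_of_tendsto_of_le_of_le' (h_add_div (-f a)) (h_add_div (φ a - f a))
    ?_ ?_ <;> filter_upwards [hf_nat.eventually_gt_atTop 0, eventually_ge_atTop a] with n hn han
  · rw [← sub_eq_add_neg]
    exact div_le_div_of_nonneg_right (sub_le_sum_Ico_of_hasDerivAt hf hφ han) hn.le
  · refine div_le_div_of_nonneg_right ?_ hn.le
    have := sum_Ico_le_of_hasDerivAt hf hφ han
    have := hφ₀ n (by exact_mod_cast han)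
    linarith

end SumIntegralComparison

theorem hasDerivAt_log_rpow {q x : ℝ} (hx : 1 < x) :
    HasDerivAt (fun x => log x ^ q) (q * log x ^ (q - 1) / x) x := by
  convert (hasDerivAt_log (by linarith)).rpow_const (p := q) (Or.inl (log_pos hx).ne') using 1
  ring

theorem antitoneOn_mul_log_rpow_div {q : ℝ} (hq₀ : 0 ≤ q) (hq₁ : q ≤ 1) :
    AntitoneOn (fun x => q * log x ^ (q - 1) / x) (Ioi 1) := by
  intro x hx y _ hxy
  have hpow : log y ^ (q - 1) ≤ log x ^ (q - 1) :=
    rpow_le_rpow_of_nonpos (log_pos hx) (log_le_log (zero_lt_one.trans hx) hxy) (by linarith)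
  dsimp only
  gcongr
  · exact mul_nonneg hq₀ (rpow_nonneg (log_pos hx).le _)
  · exact zero_lt_one.trans hx

theorem tendsto_mul_log_rpow_div_atTop (c p : ℝ) :
    Tendsto (fun x => c * log x ^ p / x) atTop (𝓝 0) := by
  have h := ((isLittleO_log_rpow_rpow_atTop p one_pos).tendsto_div_nhds_zero).const_mul c
  rw [mul_zero] at h
  exact h.congr fun x => by rw [rpow_one, mul_div_assoc]

theorem tendsto_sum_Ico_mul_log_rpow_div {q : ℝ} (hq₀ : 0 < q) (hq₁ : q ≤ 1) :
    Tendsto (fun n : ℕ => (∑ k ∈ Ico 2 n, q * log k ^ (q - 1) / k) / log n ^ q) atTop (𝓝 1) := by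
  have hIci : Ici ((2 : ℕ) : ℝ) ⊆ Ioi 1 := fun x hx => one_lt_two.trans_le (by simpa using hx)
  refine tendsto_sum_Ico_div_of_hasDerivAt (f := fun x => log x ^ q)
    (φ := fun x => q * log x ^ (q - 1) / x) (fun x hx => hasDerivAt_log_rpow (hIci hx))
    ((antitoneOn_mul_log_rpow_div hq₀.le hq₁).mono hIci) (fun x hx => ?_)
    ((tendsto_rpow_atTop hq₀).comp tendsto_log_atTop)
  have := log_pos (hIci hx)
  positivity

theorem mul_log_rpow_mul_div_cancel {x : ℝ} (hx : 1 < x) (c q : ℝ) :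
    x * log x ^ (1 - q) * (c * log x ^ (q - 1) / x) = c := by
  have hpow : log x ^ (1 - q) * log x ^ (q - 1) = 1 := by
    rw [← rpow_add (log_pos hx)]
    simp
  field_simp
  linear_combination c * hpow

theorem isEquivalent_exp_sub_one : (fun x => exp x - 1) ~[𝓝 0] id := by
  have h := (hasDerivAt_exp 0).isLittleO
  simp only [exp_zero, sub_zero, smul_eq_mul, mul_one] at h
  exact h

theorem tendsto_mul_exp_sub_one {α : Type*} {l : Filter α} {b x : α → ℝ} {L : ℝ}
    (hx : Tendsto x l (𝓝 0)) (hbx : Tendsto (fun i => b i * x i) l (𝓝 L)) :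
    Tendsto (fun i => b i * (exp (x i) - 1)) l (𝓝 L) :=
  (IsEquivalent.refl.mul (isEquivalent_exp_sub_one.comp_tendsto hx)).symm.tendsto_nhds hbx

theorem tendsto_mul_exp_sub_exp_neg {ε b : ℕ → ℝ} {L : ℝ} (hε : Tendsto ε atTop (𝓝 0))
    (h₁ : Tendsto (fun j => b j * ε (j + 1)) atTop (𝓝 L))
    (h₀ : Tendsto (fun j => b j * ε j) atTop (𝓝 L)) :
    Tendsto (fun j => b j * (exp (ε (j + 1)) - exp (-ε j))) atTop (𝓝 (2 * L)) := by
  have hnext := tendsto_mul_exp_sub_one ((tendsto_add_atTop_iff_nat 1).2 hε) h₁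
  have hcur := tendsto_mul_exp_sub_one (b := fun j => -b j) (by simpa using hε.neg)
    (by simpa using h₀)
  rw [two_mul]
  exact (hnext.add hcur).congr fun j => by ring

theorem exp_sum_Ico_add_two_sub_div (ε : ℕ → ℝ) {a j : ℕ} (h : a ≤ j) :
    (exp (∑ k ∈ Ico a (j + 2), ε k) - exp (∑ k ∈ Ico a j, ε k)) / exp (∑ k ∈ Ico a (j + 1), ε k)
      = exp (ε (j + 1)) - exp (-ε j) := by
  rw [sum_Ico_succ_top (by omega : a ≤ j + 1), sum_Ico_succ_top h, sub_div, exp_add, exp_add,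
    exp_neg]
  field_simp

theorem isEquivalent_log_nat_add_one :
    (fun n : ℕ => log ((n : ℝ) + 1)) ~[atTop] fun n => log n := by
  have hlog : Tendsto (fun n : ℕ => log (n : ℝ)) atTop atTop :=
    tendsto_log_atTop.comp tendsto_natCast_atTop_atTop
  have hsmall : (fun n : ℕ => log ((n : ℝ) + 1) - log n) =o[atTop] fun n => log n :=
    tendsto_log_nat_add_one_sub_log.isBigO_one ℝ |>.trans_isLittleO <|
      (isLittleO_one_left_iff ℝ).2 (tendsto_norm_atTop_atTop.comp hlog)
  exact (IsEquivalent.refl.add_isLittleO hsmall).congr_left (.of_forall fun n => by simp)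

theorem isEquivalent_nat_add_one :
    (fun n : ℕ => (n : ℝ) + 1) ~[atTop] fun n => (n : ℝ) :=
  IsEquivalent.refl.add_isLittleO <| (isLittleO_one_left_iff ℝ).2 <|
    tendsto_norm_atTop_atTop.comp tendsto_natCast_atTop_atTop

theorem isEquivalent_log_rpow_div_nat_add_one (p : ℝ) :
    (fun n : ℕ => log ((n : ℝ) + 1) ^ p / ((n : ℝ) + 1)) ~[atTop] fun n => log n ^ p / n :=
  (isEquivalent_log_nat_add_one.rpow (fun n => log_natCast_nonneg n)).div isEquivalent_nat_add_one

theorem isEquivalent_succ_of_eventually_eq_mul_log_rpow_div {ε : ℕ → ℝ} {c p : ℝ}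
    (hε : ∀ᶠ k in atTop, ε k = c * log k ^ p / k) : (fun j => ε (j + 1)) ~[atTop] ε := by
  have h := (IsEquivalent.refl (u := fun _ : ℕ => c)).mul (isEquivalent_log_rpow_div_nat_add_one p)
  refine (h.congr_left ?_).congr_right ?_
  · filter_upwards [(tendsto_add_atTop_nat 1).eventually hε] with j hj
    rw [Pi.mul_apply, hj]
    push_cast
    ring
  · filter_upwards [hε] with j hj
    rw [Pi.mul_apply, hj]
    ring

/-- Log-power exponential scales: with `ε_k = η q (log k)^{q-1}/k`, `q ∈ (0,1)`, and
`S_j = exp(Σ_{k=2}^{j-1} ε_k)`, we have `log S_j / (η (log j)^q) → 1` and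
`(j (log j)^{1-q}) Δ_j → 2ηq`, where `Δ_j = (S_{j+1} - S_{j-1})/S_j`. -/
theorem log_power_exponential_scales
    (η q : ℝ) (hη : 0 < η) (hq₁ : 0 < q) (hq₂ : q < 1)
    (ε : ℕ → ℝ) (hε : ∀ k : ℕ, 2 ≤ k → ε k = η * q * (Real.log k) ^ (q - 1) / (k : ℝ))
    (S : ℕ → ℝ) (hS : ∀ j, S j = Real.exp (∑ k ∈ Finset.Ico 2 j, ε k)) :
    Tendsto (fun j : ℕ => Real.log (S j) / (η * (Real.log j) ^ q)) atTop (nhds 1) ∧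
      Tendsto (fun j : ℕ =>
          (((j : ℝ) + 1) * (Real.log ((j : ℝ) + 1)) ^ (1 - q)) *
            ((S (j + 2) - S j) / S (j + 1)))
        atTop (nhds (2 * η * q)) := by
  constructor
  · refine (tendsto_sum_Ico_mul_log_rpow_div hq₁ hq₂.le).congr fun j => ?_
    rw [hS, log_exp, ← mul_div_mul_left _ _ hη.ne', mul_sum]
    refine congrArg (· / _) (sum_congr rfl fun k hk => ?_)
    rw [hε k (mem_Ico.1 hk).1]
    ring
  · have hε' : ∀ᶠ k in atTop, ε k = η * q * log k ^ (q - 1) / k :=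
      (eventually_ge_atTop 2).mono hε
    have hε₀ : Tendsto ε atTop (𝓝 0) :=
      ((tendsto_mul_log_rpow_div_atTop _ _).comp tendsto_natCast_atTop_atTop).congr'
        (hε'.mono fun k hk => hk.symm)
    have h₁ : Tendsto (fun j : ℕ => ((j : ℝ) + 1) * log ((j : ℝ) + 1) ^ (1 - q) * ε (j + 1))
        atTop (𝓝 (η * q)) := by
      refine tendsto_const_nhds.congr' ?_
      filter_upwards [eventually_ge_atTop 1] with j hj
      rw [hε (j + 1) (by omega)]
      push_cast
      exact (mul_log_rpow_mul_div_cancel (by norm_cast; omega) _ _).symm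
    have h₀ := (IsEquivalent.refl.mul
      (isEquivalent_succ_of_eventually_eq_mul_log_rpow_div hε')).tendsto_nhds h₁
    rw [mul_assoc]
    refine (tendsto_mul_exp_sub_exp_neg hε₀ h₁ h₀).congr' ?_
    filter_upwards [eventually_ge_atTop 2] with j hj
    rw [hS, hS, hS, exp_sum_Ico_add_two_sub_div ε hj]
end

section
/- Let γ : [1,∞) → (0,∞) be a measurable slowly varying function (for every a > 0, γ(a u)/γ(u) → 1 as u → ∞), let p ∈ (−1,0), and set ε_j = γ(j) j^p and S_j = exp(Σ_{k=1}^{j−1} ε_k). Then for every β ∈ (0,1], the one-step separation ratio R_j(β) = (S_j − S_{j−1})/S_{j−1}^{1−β} tends to +∞ as j → ∞; in particular R_j(β) > 1 for all sufficiently large j, so the one-step scale increment eventually dominates S_{j−1}^{1−β}. -/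
/-!
Put `h x = log γ (exp x)`. Slow variation says `h (x + t) - h x → 0` for each `t`; since `h` is
measurable, Egorov's theorem and an overlap argument in `[0, 2]` make this uniform in `t ∈ [0, 1]`,
so `h` drops by at most `δ` per unit step and `γ u ≥ c u ^ (-δ)`. With `δ = (1 + p) / 2` this gives
`ε k ≥ c k ^ q` for `q = (p - 1) / 2 ∈ (-1, 0)`, hence `∑_{k<j} ε k ≥ (c / 2) j ^ (q + 1)`. Finally
`R_j = exp (β T_j) (exp ε_j - 1) ≥ exp (β T_j) ε_j` with `T_j = log S_j`, and
`exp (A j ^ (q + 1)) j ^ q → ∞`.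
-/

open Filter Real

open MeasureTheory Set Topology

theorem exists_mem_sub_mem_of_volume_compl_lt {A B : Set ℝ} {t : ℝ} (ht : t ∈ Icc (0 : ℝ) 1)
    (hAB : volume (Aᶜ ∩ Icc 0 2) + volume (Bᶜ ∩ Icc 0 2) < 1) : ∃ s ∈ A, s - t ∈ B := by
  by_contra! H
  -- otherwise `[1, 2]` is covered by two sets of total measure `< 1`
  have hcover : Icc (1 : ℝ) 2 ⊆ (Aᶜ ∩ Icc 0 2) ∪ (· + -t) ⁻¹' (Bᶜ ∩ Icc 0 2) := by
    intro s hs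
    by_cases hsA : s ∈ A
    · exact Or.inr ⟨H s hsA, by simp only [mem_Icc] at hs ht ⊢; constructor <;> linarith⟩
    · exact Or.inl ⟨hsA, by simp only [mem_Icc] at hs ⊢; constructor <;> linarith⟩
  have := (measure_mono (μ := volume) hcover).trans (measure_union_le _ _)
  rw [measure_preimage_add_right, Real.volume_Icc] at this
  norm_num at this
  exact (this.trans_lt hAB).false

section Additive

variable {h : ℝ → ℝ}

theorem exists_measure_compl_le_eventually_abs_add_sub_lt {μ : Measure ℝ} [IsFiniteMeasure μ]
    (hm : Measurable h) (hlim : ∀ t, Tendsto (fun x => h (x + t) - h x) atTop (𝓝 0))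
    {z : ℕ → ℝ} (hz : Tendsto z atTop atTop) {η κ : ℝ} (hη : 0 < η) (hκ : 0 < κ) :
    ∃ A : Set ℝ, μ Aᶜ ≤ ENNReal.ofReal κ ∧
      ∀ᶠ n in atTop, ∀ s ∈ A, |h (z n + s) - h (z n)| < η := by
  have hmeas : ∀ n, StronglyMeasurable fun s => h (z n + s) - h (z n) := fun n =>
    ((hm.comp (measurable_const.add measurable_id)).sub measurable_const).stronglyMeasurable
  obtain ⟨C, -, hC, hunif⟩ := tendstoUniformlyOn_of_ae_tendsto' (μ := μ) hmeas
    stronglyMeasurable_const (ae_of_all _ fun s => (hlim s).comp hz) hκ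
  refine ⟨Cᶜ, by rwa [compl_compl], ?_⟩
  filter_upwards [Metric.tendstoUniformlyOn_iff.mp hunif η hη] with n hn s hs
  simpa [Real.dist_eq, abs_sub_comm] using hn s hs

theorem tendstoUniformlyOn_add_sub_of_measurable (hm : Measurable h)
    (hlim : ∀ t, Tendsto (fun x => h (x + t) - h x) atTop (𝓝 0)) :
    TendstoUniformlyOn (fun x t => h (x + t) - h x) 0 atTop (Icc 0 1) := by
  rw [Metric.tendstoUniformlyOn_iff]
  intro δ hδ
  by_contra hfreq
  simp only [not_eventually, not_forall, not_lt, Pi.zero_apply, Real.dist_eq, zero_sub,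
    abs_neg] at hfreq
  obtain ⟨x, hx, hbad⟩ := exists_seq_forall_of_frequently hfreq
  choose t ht hbad using hbad
  have hxt : Tendsto (fun n => x n + t n) atTop atTop :=
    tendsto_atTop_mono (fun n => by linarith [(ht n).1]) hx
  -- Egorov along `x n` and along `x n + t n`: at a common good `s`, the increment
  -- `h (x n + t n) - h (x n)` is the difference of two increments smaller than `δ / 2`.
  let μ := volume.restrict (Icc (0 : ℝ) 2)
  obtain ⟨A, hA, hAx⟩ := exists_measure_compl_le_eventually_abs_add_sub_lt (μ := μ) hm hlim hx
    (half_pos hδ) (by norm_num : (0 : ℝ) < 1 / 4)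
  obtain ⟨B, hB, hBx⟩ := exists_measure_compl_le_eventually_abs_add_sub_lt (μ := μ) hm hlim hxt
    (half_pos hδ) (by norm_num : (0 : ℝ) < 1 / 4)
  obtain ⟨n, hAn, hBn⟩ := (hAx.and hBx).exists
  have hAB : volume (Aᶜ ∩ Icc 0 2) + volume (Bᶜ ∩ Icc 0 2) < 1 := by
    rw [← Measure.restrict_apply' measurableSet_Icc, ← Measure.restrict_apply' measurableSet_Icc]
    calc μ Aᶜ + μ Bᶜ ≤ ENNReal.ofReal (1 / 4) + ENNReal.ofReal (1 / 4) := add_le_add hA hB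
      _ < 1 := by rw [← ENNReal.ofReal_add (by norm_num) (by norm_num)]; norm_num
  obtain ⟨s, hsA, hsB⟩ := exists_mem_sub_mem_of_volume_compl_lt (ht n) hAB
  have h₁ := hAn s hsA
  have h₂ := hBn (s - t n) hsB
  rw [show x n + t n + (s - t n) = x n + s by ring, abs_sub_comm] at h₂
  have := abs_sub_le (h (x n + t n)) (h (x n + s)) (h (x n))
  linarith [hbad n]

theorem sub_mul_le_of_forall_sub_le_add {X δ : ℝ} (hδ : 0 ≤ δ)
    (hstep : ∀ x ≥ X, ∀ t ∈ Icc (0 : ℝ) 1, h x - δ ≤ h (x + t)) :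
    ∀ x ≥ X, h X - δ * (x - X + 1) ≤ h x := by
  have hnat : ∀ n : ℕ, ∀ x ∈ Icc X (X + n), h X - δ * n ≤ h x := by
    intro n
    induction n with
    | zero =>
      intro x hx
      obtain rfl : x = X := by simp only [Nat.cast_zero, add_zero, Icc_self] at hx; exact hx
      simp
    | succ n ih =>
      intro x ⟨hXx, hxn⟩
      push_cast at hxn
      set y := max X (x - 1)
      have hy : y ∈ Icc X (X + n) := ⟨le_max_left _ _, max_le (by linarith) (by linarith)⟩
      have hyx : y ≤ x := max_le hXx (by linarith)
      have hxy := hstep y hy.1 (x - y) ⟨by linarith, by linarith [le_max_right X (x - 1)]⟩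
      rw [add_sub_cancel] at hxy
      push_cast
      linarith [ih y hy]
  intro x hx
  have hn : x - X ≤ ⌈x - X⌉₊ := Nat.le_ceil _
  have hn' : (⌈x - X⌉₊ : ℝ) < x - X + 1 := Nat.ceil_lt_add_one (by linarith)
  have := hnat ⌈x - X⌉₊ x ⟨hx, by linarith⟩
  nlinarith

end Additive

def IsSlowlyVarying (γ : ℝ → ℝ) : Prop :=
  ∀ a : ℝ, 0 < a → Tendsto (fun u => γ (a * u) / γ u) atTop (𝓝 1)

theorem IsSlowlyVarying.tendsto_log_comp_exp_add_sub {γ : ℝ → ℝ} (hγ : IsSlowlyVarying γ)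
    (hpos : ∀ᶠ u in atTop, 0 < γ u) (t : ℝ) :
    Tendsto (fun x => log (γ (exp (x + t))) - log (γ (exp x))) atTop (𝓝 0) := by
  have hlog := ((continuousAt_log one_ne_zero).tendsto.comp
    ((hγ (exp t) (exp_pos t)).comp tendsto_exp_atTop))
  rw [log_one] at hlog
  have hshift := tendsto_exp_atTop.comp (tendsto_atTop_add_const_right _ t tendsto_id)
  refine hlog.congr' ?_
  filter_upwards [tendsto_exp_atTop.eventually hpos, hshift.eventually hpos] with x hx hxt
  simp only [Function.comp_apply, ← exp_add, add_comm t x]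
  exact log_div hxt.ne' hx.ne'

theorem IsSlowlyVarying.exists_mul_rpow_neg_le {γ : ℝ → ℝ} (hγ : IsSlowlyVarying γ)
    (hm : Measurable γ) (hpos : ∀ᶠ u in atTop, 0 < γ u) {δ : ℝ} (hδ : 0 < δ) :
    ∃ c > 0, ∀ᶠ u in atTop, c * u ^ (-δ) ≤ γ u := by
  set h : ℝ → ℝ := fun x => log (γ (exp x))
  have hunif := Metric.tendstoUniformlyOn_iff.mp
    (tendstoUniformlyOn_add_sub_of_measurable (measurable_log.comp (hm.comp measurable_exp))
      (hγ.tendsto_log_comp_exp_add_sub hpos)) δ hδ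
  obtain ⟨X, hX⟩ := hunif.exists_forall_of_atTop
  have hlin := sub_mul_le_of_forall_sub_le_add (h := h) hδ.le fun x hx t ht => by
    have : |h (x + t) - h x| < δ := by
      simpa [Real.dist_eq, abs_sub_comm] using hX x hx t ht
    linarith [neg_abs_le (h (x + t) - h x)]
  refine ⟨exp (h X + δ * X - δ), exp_pos _, ?_⟩
  filter_upwards [hpos, eventually_ge_atTop (exp X)] with u hu hXu
  have hu0 : 0 < u := (exp_pos X).trans_le hXu
  have := hlin (log u) ((le_log_iff_exp_le hu0).mpr hXu)
  simp only [h, exp_log hu0] at this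
  calc exp (h X + δ * X - δ) * u ^ (-δ) = exp (h X - δ * (log u - X + 1)) := by
        rw [rpow_def_of_pos hu0, ← exp_add]; ring_nf
    _ ≤ γ u := by rw [← exp_log hu]; exact exp_le_exp.mpr this

theorem exp_mul_le_exp_add_sub_exp_div_rpow (T e β : ℝ) :
    exp (β * T) * e ≤ (exp (T + e) - exp T) / exp T ^ (1 - β) := by
  have hsplit : exp T = exp (β * T) * exp (T * (1 - β)) := by rw [← exp_add]; ring_nf
  rw [← exp_mul, le_div_iff₀ (exp_pos _), exp_add, mul_right_comm, ← hsplit]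
  nlinarith [add_one_le_exp e, exp_pos T]

theorem tendsto_exp_mul_rpow_mul_rpow_atTop {A r : ℝ} (hA : 0 < A) (hr : 0 < r) (q : ℝ) :
    Tendsto (fun x : ℝ => exp (A * x ^ r) * x ^ q) atTop atTop := by
  refine ((tendsto_exp_mul_div_rpow_atTop (-q / r) A hA).comp (tendsto_rpow_atTop hr)).congr' ?_
  filter_upwards [eventually_ge_atTop 0] with x hx
  rw [Function.comp_apply, ← rpow_mul hx, mul_div_cancel₀ _ hr.ne', rpow_neg hx, div_inv_eq_mul]

section Sums

variable {ε : ℕ → ℝ} {c q : ℝ}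

theorem eventually_mul_rpow_add_one_le_sum_Ico (hε : ∀ k, 1 ≤ k → 0 ≤ ε k)
    (hlb : ∀ᶠ k : ℕ in atTop, c * (k : ℝ) ^ q ≤ ε k) (hc : 0 ≤ c) (hq : q ≤ 0) :
    ∀ᶠ j : ℕ in atTop, c / 2 * (j : ℝ) ^ (q + 1) ≤ ∑ k ∈ Finset.Ico 1 j, ε k := by
  obtain ⟨J, hJ⟩ := (hlb.and (eventually_ge_atTop 1)).exists_forall_of_atTop
  have hJ1 : 1 ≤ J := (hJ J le_rfl).2
  filter_upwards [eventually_ge_atTop (2 * J)] with j hj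
  have hj0 : (0 : ℝ) < j := by exact_mod_cast (show 0 < j by omega)
  have htail : ∀ k ∈ Finset.Ico J j, c * (j : ℝ) ^ q ≤ ε k := fun k hk => by
    obtain ⟨hJk, hkj⟩ := Finset.mem_Ico.mp hk
    obtain ⟨hk, hk1⟩ := hJ k hJk
    have hk0 : (0 : ℝ) < k := by exact_mod_cast hk1
    exact (mul_le_mul_of_nonneg_left
      (rpow_le_rpow_of_nonpos hk0 (by exact_mod_cast hkj.le) hq) hc).trans hk
  have hcard : (j : ℝ) / 2 ≤ (Finset.Ico J j).card := by
    rw [Nat.card_Ico, Nat.cast_sub (by omega)]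
    have : (2 * J : ℝ) ≤ j := by exact_mod_cast hj
    linarith
  calc c / 2 * (j : ℝ) ^ (q + 1) = (j : ℝ) / 2 * (c * (j : ℝ) ^ q) := by
        rw [rpow_add_one hj0.ne']; ring
    _ ≤ (Finset.Ico J j).card * (c * (j : ℝ) ^ q) :=
        mul_le_mul_of_nonneg_right hcard (by positivity)
    _ ≤ ∑ k ∈ Finset.Ico J j, ε k := by
        simpa [nsmul_eq_mul] using Finset.card_nsmul_le_sum _ _ _ htail
    _ ≤ ∑ k ∈ Finset.Ico 1 j, ε k :=
        Finset.sum_le_sum_of_subset_of_nonneg (Finset.Ico_subset_Ico hJ1 le_rfl)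
          fun k hk _ => hε k (Finset.mem_Ico.mp hk).1

theorem tendsto_exp_mul_sum_Ico_mul_atTop (hε : ∀ k, 1 ≤ k → 0 ≤ ε k)
    (hlb : ∀ᶠ k : ℕ in atTop, c * (k : ℝ) ^ q ≤ ε k) (hc : 0 < c) (hq₁ : -1 < q) (hq₂ : q ≤ 0)
    {β : ℝ} (hβ : 0 < β) :
    Tendsto (fun j : ℕ => exp (β * ∑ k ∈ Finset.Ico 1 j, ε k) * ε j) atTop atTop := by
  have hmodel := ((tendsto_exp_mul_rpow_mul_rpow_atTop (by positivity : 0 < β * (c / 2))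
    (by linarith : 0 < q + 1) q).const_mul_atTop hc).comp tendsto_natCast_atTop_atTop
  refine tendsto_atTop_mono' _ ?_ hmodel
  filter_upwards [eventually_mul_rpow_add_one_le_sum_Ico hε hlb hc.le hq₂, hlb]
    with j hsum hj
  rw [Function.comp_apply, mul_left_comm, mul_assoc]
  gcongr

end Sums

/-- For slowly varying `γ`, `p ∈ (-1,0)`, `ε_j = γ(j) j^p`, `S_j = exp(Σ_{k=1}^{j-1} ε_k)`,
and any `β ∈ (0,1]`, the separation ratio `R_j(β) = (S_j - S_{j-1})/S_{j-1}^{1-β}`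
tends to `+∞`; in particular `R_j(β) > 1` eventually. -/
theorem separation_ratio_divergence
    (γ : ℝ → ℝ) (hmeas : Measurable γ) (hγpos : ∀ u : ℝ, 1 ≤ u → 0 < γ u)
    (hsv : ∀ a : ℝ, 0 < a → Tendsto (fun u : ℝ => γ (a * u) / γ u) atTop (nhds 1))
    (p : ℝ) (hp₁ : -1 < p) (hp₂ : p < 0)
    (ε : ℕ → ℝ) (hε : ∀ j : ℕ, 1 ≤ j → ε j = γ j * (j : ℝ) ^ p)
    (S : ℕ → ℝ) (hS : ∀ j, S j = Real.exp (∑ k ∈ Finset.Ico 1 j, ε k)) :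
    ∀ β : ℝ, 0 < β → β ≤ 1 →
      Tendsto (fun j : ℕ => (S (j + 1) - S j) / S j ^ (1 - β)) atTop atTop ∧
      ∀ᶠ j : ℕ in atTop, 1 < (S (j + 1) - S j) / S j ^ (1 - β) := by
  intro β hβ _
  obtain ⟨c, hc, hγc⟩ := IsSlowlyVarying.exists_mul_rpow_neg_le hsv hmeas
    ((eventually_ge_atTop 1).mono hγpos) (δ := (1 + p) / 2) (by linarith)
  have hεpos : ∀ k, 1 ≤ k → 0 ≤ ε k := fun k hk => by
    have hk1 : (1 : ℝ) ≤ k := by exact_mod_cast hk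
    rw [hε k hk]
    exact mul_nonneg (hγpos k hk1).le (rpow_nonneg (by linarith) p)
  have hεlb : ∀ᶠ k : ℕ in atTop, c * (k : ℝ) ^ (p - (1 + p) / 2) ≤ ε k := by
    filter_upwards [tendsto_natCast_atTop_atTop.eventually hγc, eventually_ge_atTop 1]
      with k hk hk1
    have hk0 : (0 : ℝ) < k := by exact_mod_cast hk1
    rw [hε k hk1, sub_eq_neg_add, rpow_add hk0, ← mul_assoc]
    exact mul_le_mul_of_nonneg_right hk (rpow_nonneg hk0.le p)
  have hR : Tendsto (fun j : ℕ => (S (j + 1) - S j) / S j ^ (1 - β)) atTop atTop := by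
    refine tendsto_atTop_mono' _ ?_
      (tendsto_exp_mul_sum_Ico_mul_atTop hεpos hεlb hc (by linarith) (by linarith) hβ)
    filter_upwards [eventually_ge_atTop 1] with j hj
    rw [hS, hS, Finset.sum_Ico_succ_top hj]
    exact exp_mul_le_exp_add_sub_exp_div_rpow _ _ β
  exact ⟨hR, hR.eventually_gt_atTop 1⟩
end

section
/- Let (γ(j))_{j≥1} be positive reals with γ(j) → γ_∞ ∈ (0,∞) as j → ∞, set ε_j = γ(j)/j and S_j = exp(Σ_{k=1}^{j−1} ε_k), and fix β ∈ (0,1]. If β γ_∞ > 1 then the one-step separation ratio R_j(β) = (S_j − S_{j−1})/S_{j−1}^{1−β} tends to +∞ (so R_j(β) > 1 eventually), while if β γ_∞ < 1 then R_j(β) tends to 0 (so R_j(β) < 1 eventually). -/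
/-!
Since `S (j + 1) = S j * exp (ε j)`, the ratio equals `exp (β T_j) (exp ε_j - 1)` with
`T_j = ∑_{k<j} ε_k`. Here `j (exp ε_j - 1) → γ∞`, and `T_j / log j → γ∞` because
`ε_k = γ(k)/k` is asymptotic to `γ∞ (log (k+1) - log k)`, whose partial sums telescope to
`γ∞ log j`. So the ratio is `j (exp ε_j - 1) · j ^ (β T_j / log j - 1)`: a factor tending to
`γ∞` times `j` to a power tending to `βγ∞ - 1`.
-/

open Filter Real

open Finset Asymptotics Topology

lemma tendsto_natCast_mul_log_succ_sub_log :
    Tendsto (fun k : ℕ => k * (log (k + 1) - log k)) atTop (𝓝 1) := by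
  refine ((tendsto_mul_log_one_add_div_atTop 1).comp tendsto_natCast_atTop_atTop).congr' ?_
  filter_upwards [eventually_ne_atTop 0] with k hk
  have hk : (k : ℝ) ≠ 0 := Nat.cast_ne_zero.2 hk
  rw [Function.comp_apply, ← log_div (by positivity) hk, add_div, div_self hk, add_comm]

lemma tendsto_sum_range_div_log {u : ℕ → ℝ} {c : ℝ}
    (hu : Tendsto (fun k : ℕ => k * u k) atTop (𝓝 c)) :
    Tendsto (fun n : ℕ => (∑ k ∈ range n, u k) / log n) atTop (𝓝 c) := by
  set g : ℕ → ℝ := fun k => log (k + 1) - log k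
  have hg_sum (n : ℕ) : ∑ k ∈ range n, g k = log n := by
    simpa [g] using sum_range_sub (fun k : ℕ => log k) n
  have hg_nonneg : 0 ≤ g := fun k => by
    rcases k.eq_zero_or_pos with rfl | hk
    · simp [g]
    · exact sub_nonneg.2 (log_le_log (by positivity) (by linarith))
  have hg_pos : ∀ᶠ k : ℕ in atTop, 0 < g k := by
    filter_upwards [eventually_ne_atTop 0] with k hk
    exact sub_pos.2 (log_lt_log (by positivity) (lt_add_one _))
  have hlittle : (fun k => u k - c * g k) =o[atTop] g := by
    rw [isLittleO_iff_tendsto' (hg_pos.mono fun k hk h => absurd h hk.ne')]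
    have := (hu.div tendsto_natCast_mul_log_succ_sub_log one_ne_zero).sub_const c
    rw [div_one, sub_self] at this
    refine this.congr' ?_
    filter_upwards [hg_pos, eventually_ne_atTop 0] with k hk hk0
    have hk0 : (k : ℝ) ≠ 0 := Nat.cast_ne_zero.2 hk0
    simp only [Pi.div_apply, g] at hk ⊢
    field_simp
  have hlog : Tendsto (fun n : ℕ => log n) atTop atTop :=
    tendsto_log_atTop.comp tendsto_natCast_atTop_atTop
  have := (hlittle.sum_range hg_nonneg (by simpa only [hg_sum] using hlog)).tendsto_div_nhds_zero
  simp only [sum_sub_distrib, ← mul_sum, hg_sum] at this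
  rw [← zero_add c]
  refine (this.add_const c).congr' ?_
  filter_upwards [hlog.eventually_gt_atTop 0] with n hn
  field_simp
  ring

lemma tendsto_natCast_mul_exp_sub_one {x : ℕ → ℝ} {c : ℝ}
    (hx : Tendsto (fun j : ℕ => j * x j) atTop (𝓝 c)) :
    Tendsto (fun j : ℕ => j * (exp (x j) - 1)) atTop (𝓝 c) := by
  have hx0 : Tendsto x atTop (𝓝 0) := by
    have := hx.mul tendsto_inv_atTop_nhds_zero_nat
    rw [mul_zero] at this
    refine this.congr' ?_
    filter_upwards [eventually_ne_atTop 0] with j hj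
    field_simp
  have hexp : (fun y => exp y - 1) ~[𝓝 0] fun y => y := by
    simpa [IsEquivalent, Pi.sub_def] using hasDerivAt_iff_isLittleO.1 (hasDerivAt_exp 0)
  exact (IsEquivalent.refl.mul (hexp.comp_tendsto hx0)).symm.tendsto_nhds hx

lemma exp_add_sub_exp_div_rpow (t x β : ℝ) :
    (exp (t + x) - exp t) / exp t ^ (1 - β) = exp (β * t) * (exp x - 1) := by
  rw [← exp_mul, div_eq_iff (exp_pos _).ne', mul_right_comm, ← exp_add,
    show β * t + t * (1 - β) = t by ring, exp_add]
  ring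

theorem separation_ratio_boundary_general
    (γ : ℕ → ℝ)
    (γinf : ℝ) (hγinf : 0 < γinf) (hγlim : Tendsto γ atTop (nhds γinf))
    (ε : ℕ → ℝ) (hε : ∀ j : ℕ, 1 ≤ j → ε j = γ j / j)
    (S : ℕ → ℝ) (hS : ∀ j, S j = Real.exp (∑ k ∈ Finset.Ico 1 j, ε k))
    (β : ℝ) :
    (1 < β * γinf →
        Tendsto (fun j : ℕ => (S (j + 1) - S j) / S j ^ (1 - β)) atTop atTop ∧
        ∀ᶠ j : ℕ in atTop, 1 < (S (j + 1) - S j) / S j ^ (1 - β)) ∧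
      (β * γinf < 1 →
        Tendsto (fun j : ℕ => (S (j + 1) - S j) / S j ^ (1 - β)) atTop (nhds 0) ∧
        ∀ᶠ j : ℕ in atTop, (S (j + 1) - S j) / S j ^ (1 - β) < 1) := by
  set T : ℕ → ℝ := fun j => ∑ k ∈ Ico 1 j, ε k
  have hkγ : Tendsto (fun k : ℕ => k * (γ k / k)) atTop (𝓝 γinf) := by
    refine hγlim.congr' ?_
    filter_upwards [eventually_ne_atTop 0] with k hk
    rw [mul_div_cancel₀ _ (Nat.cast_ne_zero.2 hk)]
  have hkε : Tendsto (fun k : ℕ => k * ε k) atTop (𝓝 γinf) := by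
    refine hkγ.congr' ?_
    filter_upwards [eventually_ge_atTop 1] with k hk
    rw [hε k hk]
  -- `γ 0 / 0 = 0`, so summing `γ k / k` over `range j` gives `T j` whatever `ε 0` is.
  have hT : Tendsto (fun j : ℕ => T j / log j) atTop (𝓝 γinf) := by
    refine (tendsto_sum_range_div_log hkγ).congr' ?_
    filter_upwards [eventually_ge_atTop 1] with j hj
    rw [range_eq_Ico, sum_eq_sum_Ico_succ_bot hj, Nat.cast_zero, div_zero, zero_add]
    exact congrArg (· / log j) (sum_congr rfl fun k hk => (hε k (mem_Ico.1 hk).1).symm)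
  have hlog : Tendsto (fun j : ℕ => log j) atTop atTop :=
    tendsto_log_atTop.comp tendsto_natCast_atTop_atTop
  have hR : (fun j : ℕ => (j * (exp (ε j) - 1)) * exp (log j * (β * (T j / log j) - 1)))
      =ᶠ[atTop] fun j : ℕ => (S (j + 1) - S j) / S j ^ (1 - β) := by
    filter_upwards [eventually_ge_atTop 1, hlog.eventually_gt_atTop 0] with j hj hj'
    have hj0 : (0 : ℝ) < j := by exact_mod_cast hj
    rw [hS, hS, sum_Ico_succ_top hj, exp_add_sub_exp_div_rpow,
      show log j * (β * (T j / log j) - 1) = β * T j - log j by field_simp, exp_sub, exp_log hj0]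
    field_simp
    rfl
  refine ⟨fun h => ?_, fun h => ?_⟩
  · have hexp := tendsto_exp_atTop.comp
      (hlog.atTop_mul_pos (sub_pos.2 h) ((hT.const_mul β).sub_const 1))
    have hR_top := ((tendsto_natCast_mul_exp_sub_one hkε).pos_mul_atTop hγinf hexp).congr' hR
    exact ⟨hR_top, hR_top.eventually_gt_atTop 1⟩
  · have hexp := tendsto_exp_atBot.comp
      (hlog.atTop_mul_neg (sub_neg.2 h) ((hT.const_mul β).sub_const 1))
    have hR_zero := ((tendsto_natCast_mul_exp_sub_one hkε).mul hexp).congr' hR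
    rw [mul_zero] at hR_zero
    exact ⟨hR_zero, hR_zero.eventually_lt_const one_pos⟩

/-- Boundary case `ε_j = γ(j)/j` with `γ(j) → γ∞ ∈ (0,∞)`: for `β ∈ (0,1]`, if
`β γ∞ > 1` then `R_j(β) = (S_j - S_{j-1})/S_{j-1}^{1-β} → ∞` (so eventually `> 1`),
while if `β γ∞ < 1` then `R_j(β) → 0` (so eventually `< 1`). -/
theorem separation_ratio_boundary
    (γ : ℕ → ℝ) (hγpos : ∀ j : ℕ, 1 ≤ j → 0 < γ j)
    (γinf : ℝ) (hγinf : 0 < γinf) (hγlim : Tendsto γ atTop (nhds γinf))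
    (ε : ℕ → ℝ) (hε : ∀ j : ℕ, 1 ≤ j → ε j = γ j / j)
    (S : ℕ → ℝ) (hS : ∀ j, S j = Real.exp (∑ k ∈ Finset.Ico 1 j, ε k))
    (β : ℝ) (hβ₀ : 0 < β) (hβ₁ : β ≤ 1) :
    (1 < β * γinf →
        Tendsto (fun j : ℕ => (S (j + 1) - S j) / S j ^ (1 - β)) atTop atTop ∧
        ∀ᶠ j : ℕ in atTop, 1 < (S (j + 1) - S j) / S j ^ (1 - β)) ∧
      (β * γinf < 1 →
        Tendsto (fun j : ℕ => (S (j + 1) - S j) / S j ^ (1 - β)) atTop (nhds 0) ∧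
        ∀ᶠ j : ℕ in atTop, (S (j + 1) - S j) / S j ^ (1 - β) < 1) :=
  separation_ratio_boundary_general γ γinf hγinf hγlim ε hε S hS β
end
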